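/- (Correctness of the finite-horizon unconstrained DP recursion, Algorithm 4.) Let A (n×n), B (n×m), C (p×n), D (p×m) be real matrices and T ≥ 1 a natural number. Define matrices P[T+1], ..., P[1] and K[T], ..., K[1] backward by P[T+1] = 0 and, for τ = T down to 1, K[τ] = −(Dᵀ D + Bᵀ P[τ+1] B)⁻¹ (Dᵀ C + Bᵀ P[τ+1] A) and P[τ] = (C + D K[τ])ᵀ (C + D K[τ]) + (A + B K[τ])ᵀ P[τ+1] (A + B K[τ]). Assume Dᵀ D + Bᵀ P[τ+1] B is positive definite for every τ. Then for every real n×n matrix X₁: (i) for every choice of controls U[1], ..., U[T] (each m×n) with trajectory X[1] = X₁ and X[τ+1] = A X[τ] + B U[τ], the total cost Σ_{τ=1}^{T} ‖C X[τ] + D U[τ]‖_F² is at least tr(X₁ᵀ P[1] X₁); and (ii) the controls U[τ] = K[τ] X[τ] achieve total cost exactly tr(X₁ᵀ P[1] X₁). -/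

import Mathlib

/-!
Completing the square. The gain `K = K τ` makes the cross term vanish, so with `P' = P (τ + 1)`,
every state `X` and control `U` satisfy
`‖CX + DU‖² + tr((AX + BU)ᵀ P' (AX + BU)) = tr(Xᵀ P τ X) + tr((U - KX)ᵀ (DᵀD + BᵀP'B) (U - KX))`.
Summed along a trajectory, the cost-to-go terms `tr(X τᵀ P τ X τ)` telescope, and `P (T + 1) = 0`;
so the total cost is `tr(X₁ᵀ P 1 X₁)` plus a sum of gaps that are nonnegative by positive
definiteness and vanish for the feedback `U τ = K τ * X τ`.
-/

open Matrix

/-- The squared Frobenius norm: the sum of squares of all entries. -/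
def frobSq {a b : ℕ} (M : Matrix (Fin a) (Fin b) ℝ) : ℝ := ∑ i, ∑ j, (M i j) ^ 2

lemma frobSq_eq_trace {a b : ℕ} (M : Matrix (Fin a) (Fin b) ℝ) :
    frobSq M = (Mᵀ * M).trace := by
  simp only [frobSq, trace, diag, mul_apply, transpose_apply, sq]
  rw [Finset.sum_comm]

namespace Matrix

variable {R : Type*} [CommRing R] {ι μ π κ : Type*} [Fintype ι] [Fintype μ] [Fintype π]

lemma IsSymm.transpose_mul_mul_same {P : Matrix ι ι R} (hP : P.IsSymm) (G : Matrix ι κ R) :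
    (Gᵀ * P * G).IsSymm := by
  simp only [IsSymm, transpose_mul, transpose_transpose, hP.eq, Matrix.mul_assoc]

lemma riccati_isSymm (A : Matrix ι ι R) (B : Matrix ι μ R) (C : Matrix π ι R) (D : Matrix π μ R)
    {P : ℕ → Matrix ι ι R} (K : ℕ → Matrix μ ι R) {T : ℕ} (hPT : (P (T + 1)).IsSymm)
    (hP : ∀ τ, 1 ≤ τ → τ ≤ T →
      P τ = (C + D * K τ)ᵀ * (C + D * K τ) + (A + B * K τ)ᵀ * P (τ + 1) * (A + B * K τ))
    {τ : ℕ} (h1 : 1 ≤ τ) (h2 : τ ≤ T + 1) : (P τ).IsSymm := by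
  refine Nat.decreasingInduction' (fun k hk hτk ih => ?_) h2 hPT
  rw [hP k (h1.trans hτk) (Nat.le_of_lt_succ hk)]
  have hgram : ((C + D * K k)ᵀ * (C + D * K k)).IsSymm := by
    simp only [IsSymm, transpose_mul, transpose_transpose]
  exact hgram.add (ih.transpose_mul_mul_same _)

lemma gain_stationary [DecidableEq μ] (A : Matrix ι ι R) (B : Matrix ι μ R) (C : Matrix π ι R)
    (D : Matrix π μ R) (P' : Matrix ι ι R) {K : Matrix μ ι R}
    (hunit : IsUnit (Dᵀ * D + Bᵀ * P' * B))
    (hK : K = -((Dᵀ * D + Bᵀ * P' * B)⁻¹ * (Dᵀ * C + Bᵀ * P' * A))) :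
    Dᵀ * (C + D * K) + Bᵀ * P' * (A + B * K) = 0 := by
  have hMK : (Dᵀ * D + Bᵀ * P' * B) * K = -(Dᵀ * C + Bᵀ * P' * A) := by
    rw [hK, Matrix.mul_neg,
      mul_nonsing_inv_cancel_left _ _ ((isUnit_iff_isUnit_det _).1 hunit)]
  calc Dᵀ * (C + D * K) + Bᵀ * P' * (A + B * K)
      = (Dᵀ * C + Bᵀ * P' * A) + (Dᵀ * D + Bᵀ * P' * B) * K := by
        simp only [Matrix.mul_add, Matrix.add_mul, Matrix.mul_assoc]; abel
    _ = 0 := by rw [hMK, add_neg_cancel]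

lemma completed_square {A : Matrix ι ι R} {B : Matrix ι μ R} {C : Matrix π ι R}
    {D : Matrix π μ R} {P' : Matrix ι ι R} {K : Matrix μ ι R} (hsym : P'.IsSymm)
    (hcross : Dᵀ * (C + D * K) + Bᵀ * P' * (A + B * K) = 0)
    (X : Matrix ι κ R) (U : Matrix μ κ R) :
    (C * X + D * U)ᵀ * (C * X + D * U) + (A * X + B * U)ᵀ * P' * (A * X + B * U)
      = Xᵀ * ((C + D * K)ᵀ * (C + D * K) + (A + B * K)ᵀ * P' * (A + B * K)) * X
        + (U - K * X)ᵀ * (Dᵀ * D + Bᵀ * P' * B) * (U - K * X) := by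
  have hC : C * X + D * U = (C + D * K) * X + D * (U - K * X) := by
    simp only [Matrix.mul_sub, Matrix.add_mul, Matrix.mul_assoc]; abel
  have hA : A * X + B * U = (A + B * K) * X + B * (U - K * X) := by
    simp only [Matrix.mul_sub, Matrix.add_mul, Matrix.mul_assoc]; abel
  set V := U - K * X
  set S := Dᵀ * (C + D * K) + Bᵀ * P' * (A + B * K)
  have expand : ((C + D * K) * X + D * V)ᵀ * ((C + D * K) * X + D * V)
      + ((A + B * K) * X + B * V)ᵀ * P' * ((A + B * K) * X + B * V)
      = Xᵀ * ((C + D * K)ᵀ * (C + D * K) + (A + B * K)ᵀ * P' * (A + B * K)) * X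
        + Vᵀ * (Dᵀ * D + Bᵀ * P' * B) * V + Xᵀ * Sᵀ * V + Vᵀ * S * X := by
    simp only [S, transpose_add, transpose_mul, transpose_transpose, hsym.eq,
      Matrix.add_mul, Matrix.mul_add, Matrix.mul_assoc]
    abel
  rw [hC, hA, expand, hcross]
  simp

lemma sum_cost_eq_value_add_sum_gap [Fintype κ] (A : Matrix ι ι R) (B : Matrix ι μ R)
    (C : Matrix π ι R) (D : Matrix π μ R) {P : ℕ → Matrix ι ι R} {K : ℕ → Matrix μ ι R} {T : ℕ}
    (hT : 1 ≤ T) (hPT : P (T + 1) = 0) (hsym : ∀ τ, 1 ≤ τ → τ ≤ T → (P (τ + 1)).IsSymm)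
    (hcross : ∀ τ, 1 ≤ τ → τ ≤ T → Dᵀ * (C + D * K τ) + Bᵀ * P (τ + 1) * (A + B * K τ) = 0)
    (hP : ∀ τ, 1 ≤ τ → τ ≤ T →
      P τ = (C + D * K τ)ᵀ * (C + D * K τ) + (A + B * K τ)ᵀ * P (τ + 1) * (A + B * K τ))
    (X : ℕ → Matrix ι κ R) (U : ℕ → Matrix μ κ R)
    (hX : ∀ τ, 1 ≤ τ → τ < T → X (τ + 1) = A * X τ + B * U τ) :
    ∑ τ ∈ Finset.Icc 1 T, ((C * X τ + D * U τ)ᵀ * (C * X τ + D * U τ)).trace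
      = ((X 1)ᵀ * P 1 * X 1).trace + ∑ τ ∈ Finset.Icc 1 T,
          ((U τ - K τ * X τ)ᵀ * (Dᵀ * D + Bᵀ * P (τ + 1) * B) * (U τ - K τ * X τ)).trace := by
  set V : ℕ → R := fun τ ↦ ((X τ)ᵀ * P τ * X τ).trace
  have step : ∀ τ ∈ Finset.Icc 1 T,
      ((C * X τ + D * U τ)ᵀ * (C * X τ + D * U τ)).trace
        = ((U τ - K τ * X τ)ᵀ * (Dᵀ * D + Bᵀ * P (τ + 1) * B) * (U τ - K τ * X τ)).trace
          - (V (τ + 1) - V τ) := by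
    intro τ hτ
    obtain ⟨h1, h2⟩ := Finset.mem_Icc.mp hτ
    have hnext : ((A * X τ + B * U τ)ᵀ * P (τ + 1) * (A * X τ + B * U τ)).trace = V (τ + 1) := by
      rcases h2.lt_or_eq with hlt | rfl
      · simp only [V, hX τ h1 hlt]
      · simp [V, hPT]
    have hsq := congrArg trace (completed_square (hsym τ h1 h2) (hcross τ h1 h2) (X τ) (U τ))
    rw [← hP τ h1 h2, trace_add, trace_add, hnext] at hsq
    linear_combination hsq
  rw [Finset.sum_congr rfl step, Finset.sum_sub_distrib, Finset.sum_Icc_sub hT]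
  simp only [V, hPT, Matrix.mul_zero, Matrix.zero_mul, trace_zero]
  ring

end Matrix

theorem dp_recursion_correct (n m p T : ℕ) (hT : 1 ≤ T)
    (A : Matrix (Fin n) (Fin n) ℝ) (B : Matrix (Fin n) (Fin m) ℝ)
    (C : Matrix (Fin p) (Fin n) ℝ) (D : Matrix (Fin p) (Fin m) ℝ)
    (P : ℕ → Matrix (Fin n) (Fin n) ℝ) (K : ℕ → Matrix (Fin m) (Fin n) ℝ)
    (hPT : P (T + 1) = 0)
    (hpd : ∀ τ, 1 ≤ τ → τ ≤ T → (Dᵀ * D + Bᵀ * P (τ + 1) * B).PosDef)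
    (hK : ∀ τ, 1 ≤ τ → τ ≤ T →
      K τ = -((Dᵀ * D + Bᵀ * P (τ + 1) * B)⁻¹ * (Dᵀ * C + Bᵀ * P (τ + 1) * A)))
    (hP : ∀ τ, 1 ≤ τ → τ ≤ T →
      P τ = (C + D * K τ)ᵀ * (C + D * K τ) +
        (A + B * K τ)ᵀ * P (τ + 1) * (A + B * K τ)) :
    ∀ X₁ : Matrix (Fin n) (Fin n) ℝ,
      (∀ (X : ℕ → Matrix (Fin n) (Fin n) ℝ) (U : ℕ → Matrix (Fin m) (Fin n) ℝ),
        X 1 = X₁ →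
        (∀ τ, 1 ≤ τ → τ < T → X (τ + 1) = A * X τ + B * U τ) →
        Matrix.trace (X₁ᵀ * P 1 * X₁) ≤
          ∑ τ ∈ Finset.Icc 1 T, frobSq (C * X τ + D * U τ)) ∧
      (∀ (X : ℕ → Matrix (Fin n) (Fin n) ℝ) (U : ℕ → Matrix (Fin m) (Fin n) ℝ),
        X 1 = X₁ →
        (∀ τ, 1 ≤ τ → τ < T → X (τ + 1) = A * X τ + B * U τ) →
        (∀ τ, 1 ≤ τ → τ ≤ T → U τ = K τ * X τ) →
        ∑ τ ∈ Finset.Icc 1 T, frobSq (C * X τ + D * U τ) =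
          Matrix.trace (X₁ᵀ * P 1 * X₁)) := by
  intro X₁
  have hsym : ∀ τ, 1 ≤ τ → τ ≤ T → (P (τ + 1)).IsSymm := fun τ _ h2 ↦
    riccati_isSymm A B C D K (hPT ▸ isSymm_zero) hP (Nat.le_add_left 1 τ) (by omega)
  have hcross τ (h1 : 1 ≤ τ) (h2 : τ ≤ T) :=
    gain_stationary A B C D _ (hpd τ h1 h2).isUnit (hK τ h1 h2)
  have cost (X : ℕ → Matrix (Fin n) (Fin n) ℝ) (U : ℕ → Matrix (Fin m) (Fin n) ℝ)
      (hX₁ : X 1 = X₁) (hX : ∀ τ, 1 ≤ τ → τ < T → X (τ + 1) = A * X τ + B * U τ) :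
      ∑ τ ∈ Finset.Icc 1 T, frobSq (C * X τ + D * U τ)
        = (X₁ᵀ * P 1 * X₁).trace + ∑ τ ∈ Finset.Icc 1 T,
          ((U τ - K τ * X τ)ᵀ * (Dᵀ * D + Bᵀ * P (τ + 1) * B) * (U τ - K τ * X τ)).trace := by
    simp only [frobSq_eq_trace, ← hX₁]
    exact sum_cost_eq_value_add_sum_gap A B C D hT hPT hsym hcross hP X U hX
  refine ⟨fun X U hX₁ hX ↦ ?_, fun X U hX₁ hX hU ↦ ?_⟩
  · rw [cost X U hX₁ hX]
    refine le_add_of_nonneg_right (Finset.sum_nonneg fun τ hτ ↦ ?_)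
    obtain ⟨h1, h2⟩ := Finset.mem_Icc.mp hτ
    simpa only [conjTranspose_eq_transpose_of_trivial] using
      ((hpd τ h1 h2).posSemidef.conjTranspose_mul_mul_same (U τ - K τ * X τ)).trace_nonneg
  · rw [cost X U hX₁ hX, Finset.sum_eq_zero, add_zero]
    intro τ hτ
    obtain ⟨h1, h2⟩ := Finset.mem_Icc.mp hτ
    simp [hU τ h1 h2]
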